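/- arXiv:1901.10647 — 3 statements merged into one kernel-verified Lean document; each statement's English description precedes it below -/
import Mathlib

section
/- (Exponential moment bound for conditional information content.) Let (X,Y) ∈ ℝ^{2k} × ℝ have joint density f_{XY}, and define L(t) = ∫ f_{Y|X}(y|x)^t f_X(x) dμ(x,y) for t > 0. Assume L(t) < ∞ for all t > 0. Fix any Q̄ > 0, set K₁ = max{ sup_{t ∈ (0,1]} t²·(t L(t))'' , sup_{t > 1} t²·(Q̄^{1−t} L(t))'' }, and assume K₁ < ∞. Define h̃(Y|X) = −log f_{Y|X}(Y|X) and h(Y|X) = E[h̃(Y|X)]. Then for all μ ∈ ℝ, E[exp(μ(h̃(Y|X) − h(Y|X)))] ≤ exp((K₁+1)·r(−μ)), where r(u) = u − log(1+u) for u > −1 and r(u) = +∞ otherwise. -/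
open MeasureTheory ProbabilityTheory Filter Topology Real
open scoped ENNReal NNReal

noncomputable section

namespace CondInfo

/-- Marginal density of `X` obtained from the joint density `f` of `(X, Y)`. -/
def margX {k : ℕ} (f : ((Fin (2 * k) → ℝ) × ℝ) → ℝ) (x : Fin (2 * k) → ℝ) : ℝ :=
  ∫ y, f (x, y)

/-- Conditional density `f_{Y|X}(y|x) = f_{XY}(x,y) / f_X(x)`. -/
def condD {k : ℕ} (f : ((Fin (2 * k) → ℝ) × ℝ) → ℝ) (p : (Fin (2 * k) → ℝ) × ℝ) : ℝ :=
  f p / margX f p.1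

/-- `L(t) = ∫ f_{Y|X}(y|x)^t f_X(x) dμ(x,y)`. -/
def Lmom {k : ℕ} (f : ((Fin (2 * k) → ℝ) × ℝ) → ℝ) (t : ℝ) : ℝ :=
  (∫⁻ p, ENNReal.ofReal (condD f p ^ t * margX f p.1)).toReal

/-- The conditional differential entropy `h(Y|X) = −∫ f_{XY} log f_{Y|X}`. -/
def hYX {k : ℕ} (f : ((Fin (2 * k) → ℝ) × ℝ) → ℝ) : ℝ :=
  -∫ p, f p * Real.log (condD f p)

/-- The set whose supremum is the first term in the definition of `K₁`. -/
def K1setA {k : ℕ} (f : ((Fin (2 * k) → ℝ) × ℝ) → ℝ) : Set ℝ :=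
  (fun t => t ^ 2 * iteratedDeriv 2 (fun u => u * Lmom f u) t) '' Set.Ioc (0 : ℝ) 1

/-- The set whose supremum is the second term in the definition of `K₁`. -/
def K1setB {k : ℕ} (f : ((Fin (2 * k) → ℝ) × ℝ) → ℝ) (Q : ℝ) : Set ℝ :=
  (fun t => t ^ 2 * iteratedDeriv 2 (fun u => Q ^ (1 - u) * Lmom f u) t) '' Set.Ioi (1 : ℝ)

/-- `K₁ = max{ sup_{t∈(0,1]} t² (t L(t))'' , sup_{t>1} t² (Q̄^{1−t} L(t))'' }`. -/
def K1 {k : ℕ} (f : ((Fin (2 * k) → ℝ) × ℝ) → ℝ) (Q : ℝ) : ℝ :=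
  max (sSup (K1setA f)) (sSup (K1setB f Q))

/-- The rate function `r(u) = u − log(1+u)` for `u > −1`, `+∞` otherwise
(valued in `ℝ≥0∞`). -/
def rfun (u : ℝ) : ℝ≥0∞ :=
  if -1 < u then ENNReal.ofReal (u - Real.log (1 + u)) else ⊤

/-- `exp(c · e)` for `e ∈ ℝ≥0∞` (equal to `⊤` when `e = ⊤`). -/
def expRate (c : ℝ) (e : ℝ≥0∞) : ℝ≥0∞ :=
  if e = ⊤ then ⊤ else ENNReal.ofReal (Real.exp (c * e.toReal))

end CondInfo

open CondInfo

open Set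

/-!
With `t = 1 - μ`, the exponential moment equals `exp ((t - 1) h) L(t)`, so everything reduces to
bounding `L(t)`. The moments `s ↦ ∫ g^s (log g)^j f_X` (with `g = f_{Y|X}`) are differentiable in
`s > 0` with derivative the next moment, by dominated differentiation, since
`|log g|^j ≤ C (g^δ + g^(-δ))`; in particular `L` is `C²`, `L(1) = 1` and `L'(1) = -h(Y|X)`.
For `G(s) = s L(s)` (when `t ≤ 1`) or `G(s) = Q̄^(1-s) L(s)` (when `t > 1`), the bound
`s² G''(s) ≤ K₁` makes `G(s) + K₁ log s` concave between `t` and `1`, and its tangent at `1` gives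
`G(t) ≤ G(1) + G'(1) (t - 1) + K₁ (t - 1 - log t)`. Then `1 + x ≤ exp x` yields the claim.
-/

namespace Real

lemma abs_log_pow_le {y δ : ℝ} (hy : 0 < y) (hδ : 0 < δ) (j : ℕ) :
    |log y| ^ j ≤ (j / δ) ^ j * (y ^ δ + y ^ (-δ)) := by
  have key : ∀ z : ℝ, 1 ≤ z → log z ^ j ≤ (j / δ) ^ j * z ^ δ := by
    intro z hz
    rcases Nat.eq_zero_or_pos j with rfl | hj
    · simpa using one_le_rpow hz hδ.le
    have hjδ : 0 < δ / j := by positivity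
    calc log z ^ j ≤ (z ^ (δ / j) / (δ / j)) ^ j :=
          pow_le_pow_left₀ (log_nonneg hz) (log_le_rpow_div (by linarith) hjδ) j
      _ = (j / δ) ^ j * z ^ δ := by
          rw [div_pow, ← rpow_mul_natCast (by linarith), div_mul_cancel₀ _ (by positivity),
            div_eq_mul_inv, ← inv_pow, inv_div, mul_comm]
  have hpos : 0 ≤ (j / δ : ℝ) ^ j := by positivity
  rcases le_or_gt 1 y with h1 | h1
  · rw [abs_of_nonneg (log_nonneg h1)]
    nlinarith [key y h1, rpow_nonneg hy.le (-δ)]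
  · have h := key y⁻¹ (one_le_inv₀ hy |>.mpr h1.le)
    rw [log_inv, inv_rpow hy.le, ← rpow_neg hy.le, neg_pow] at h
    rw [abs_of_neg (log_neg hy h1), neg_pow]
    nlinarith [rpow_nonneg hy.le δ]

lemma rpow_le_rpow_add_rpow {y a s b : ℝ} (hy : 0 ≤ y) (ha : 0 < a) (has : a ≤ s) (hsb : s ≤ b) :
    y ^ s ≤ y ^ a + y ^ b := by
  rcases hy.eq_or_lt with rfl | hy
  · rw [zero_rpow (by linarith), zero_rpow ha.ne']
    positivity
  rcases le_or_gt y 1 with h1 | h1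
  · linarith [rpow_le_rpow_of_exponent_ge hy h1 has, rpow_nonneg hy.le b]
  · linarith [rpow_le_rpow_of_exponent_le h1.le hsb, rpow_nonneg hy.le a]

lemma hasDerivAt_const_rpow_of_nonneg {y s : ℝ} (hy : 0 ≤ y) (hs : 0 < s) :
    HasDerivAt (fun u => y ^ u) (y ^ s * log y) s := by
  rcases hy.eq_or_lt with rfl | hy
  · rw [zero_rpow hs.ne', zero_mul]
    refine (hasDerivAt_const s (0 : ℝ)).congr_of_eventuallyEq ?_
    filter_upwards [Ioi_mem_nhds hs] with u hu
    exact zero_rpow hu.ne'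
  · simpa [mul_comm] using (hasStrictDerivAt_const_rpow hy s).hasDerivAt

lemma norm_rpow_mul_log_pow_mul_le {y z s u : ℝ} (hy : 0 ≤ y) (hz : 0 ≤ z) (hs : 0 < s)
    (hu : u ∈ Metric.ball s (s / 4)) (j : ℕ) :
    ‖y ^ u * log y ^ j * z‖ ≤ 2 * (4 * j / s) ^ j * (y ^ (s / 2) * z + y ^ (2 * s) * z) := by
  rw [Metric.mem_ball, dist_eq, abs_lt] at hu
  have hu0 : 0 < u := by linarith
  rcases hy.eq_or_lt with rfl | hy
  · rw [zero_rpow hu0.ne', zero_mul, zero_mul, norm_zero]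
    positivity
  have hδ : (0 : ℝ) < s / 4 := by positivity
  have hlog := abs_log_pow_le hy hδ j
  rw [show (j : ℝ) / (s / 4) = 4 * j / s by ring] at hlog
  have hsum : y ^ (u + s / 4) + y ^ (u - s / 4) ≤ 2 * (y ^ (s / 2) + y ^ (2 * s)) := by
    have h1 := rpow_le_rpow_add_rpow hy.le (a := s / 2) (b := 2 * s) (s := u + s / 4)
      (by positivity) (by linarith) (by linarith)
    have h2 := rpow_le_rpow_add_rpow hy.le (a := s / 2) (b := 2 * s) (s := u - s / 4)
      (by positivity) (by linarith) (by linarith)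
    linarith
  have hC : (0 : ℝ) ≤ (4 * j / s) ^ j := by positivity
  calc ‖y ^ u * log y ^ j * z‖ = y ^ u * |log y| ^ j * z := by
        rw [norm_mul, norm_mul, norm_pow, norm_of_nonneg (rpow_nonneg hy.le u),
          norm_of_nonneg hz, norm_eq_abs]
    _ ≤ y ^ u * ((4 * j / s) ^ j * (y ^ (s / 4) + y ^ (-(s / 4)))) * z := by gcongr
    _ = (4 * j / s) ^ j * (y ^ (u + s / 4) + y ^ (u - s / 4)) * z := by
        rw [rpow_add hy, rpow_sub hy, rpow_neg hy.le]
        field_simp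
    _ ≤ (4 * j / s) ^ j * (2 * (y ^ (s / 2) + y ^ (2 * s))) * z := by gcongr
    _ = 2 * (4 * j / s) ^ j * (y ^ (s / 2) * z + y ^ (2 * s) * z) := by ring

-- `a` stands for the factor `t` or `Q̄^(1-t)` tilting `L`, and `c` for its derivative at `1`.
lemma exp_mul_le_exp_of_mul_le_one_add {a c h K L t : ℝ} (ha : 0 < a)
    (hG : a * L ≤ 1 + (c - h) * (t - 1) + K * (t - 1 - log t)) :
    exp ((t - 1) * h) * L ≤ exp (K * (t - 1 - log t) + c * (t - 1) - log a) := by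
  have hL : L ≤ exp ((c - h) * (t - 1) + K * (t - 1 - log t) - log a) := by
    rw [exp_sub, exp_log ha, le_div_iff₀ ha]
    linarith [add_one_le_exp ((c - h) * (t - 1) + K * (t - 1 - log t))]
  calc exp ((t - 1) * h) * L
      ≤ exp ((t - 1) * h) * exp ((c - h) * (t - 1) + K * (t - 1 - log t) - log a) := by gcongr
    _ = exp (K * (t - 1 - log t) + c * (t - 1) - log a) := by rw [← exp_add]; ring_nf

end Real

lemma ConcaveOn.le_add_mul_sub_of_hasDerivAt {S : Set ℝ} {f : ℝ → ℝ} {f' x y : ℝ}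
    (hf : ConcaveOn ℝ S f) (hx : x ∈ S) (hy : y ∈ S) (hf' : HasDerivAt f f' x) :
    f y ≤ f x + f' * (y - x) := by
  rcases lt_trichotomy x y with hxy | rfl | hxy
  · have := hf.slope_le_of_hasDerivAt hx hy hxy hf'
    rw [slope_def_field, div_le_iff₀ (sub_pos.2 hxy)] at this
    linarith
  · simp
  · have := hf.le_slope_of_hasDerivAt hy hx hxy hf'
    rw [slope_def_field, le_div_iff₀ (sub_pos.2 hxy)] at this
    linarith

lemma le_add_deriv_mul_sub_add_mul_sub_log {G : ℝ → ℝ} {K t : ℝ}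
    (hG : ContDiffOn ℝ 2 G (Ioi 0)) (ht : 0 < t)
    (hK : ∀ s ∈ uIoo t 1, s ^ 2 * iteratedDeriv 2 G s ≤ K) :
    G t ≤ G 1 + deriv G 1 * (t - 1) + K * (t - 1 - log t) := by
  have hpos : uIcc t 1 ⊆ Ioi 0 := fun s hs => lt_of_lt_of_le (lt_min ht one_pos) hs.1
  have hG' : ∀ s ∈ Ioi (0 : ℝ), HasDerivAt G (deriv G s) s := fun s hs =>
    ((hG.differentiableOn two_ne_zero) s hs).differentiableAt (isOpen_Ioi.mem_nhds hs)
      |>.hasDerivAt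
  have hG'' : ∀ s ∈ Ioi (0 : ℝ), HasDerivAt (deriv G) (iteratedDeriv 2 G s) s := by
    intro s hs
    rw [iteratedDeriv_succ, iteratedDeriv_one]
    exact (((hG.deriv_of_isOpen isOpen_Ioi (m := 1) le_rfl).differentiableOn one_ne_zero) s hs
      |>.differentiableAt (isOpen_Ioi.mem_nhds hs)).hasDerivAt
  have hconc : ConcaveOn ℝ (uIcc t 1) fun s => G s + K * log s := by
    refine concaveOn_of_hasDerivWithinAt2_nonpos (convex_uIcc t 1)
      (f' := fun s => deriv G s + K * s⁻¹) (f'' := fun s => iteratedDeriv 2 G s - K * (s ^ 2)⁻¹)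
      ?_ (fun s hs => ?_) (fun s hs => ?_) (fun s hs => ?_)
    · exact fun s hs => ((hG' s (hpos hs)).continuousAt.add
        (continuousAt_const.mul (continuousAt_log (hpos hs).ne'))).continuousWithinAt
    · have hs0 := hpos (interior_subset hs)
      exact ((hG' s hs0).add ((hasDerivAt_log hs0.ne').const_mul K)).hasDerivWithinAt
    · have hs0 := hpos (interior_subset hs)
      have := (hG'' s hs0).add ((hasDerivAt_inv hs0.ne').const_mul K)
      rw [mul_neg, ← sub_eq_add_neg] at this
      exact this.hasDerivWithinAt
    · have hs0 := hpos (interior_subset hs)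
      have hb := hK s (by simpa [uIcc, uIoo] using hs)
      rw [sub_nonpos, ← div_eq_mul_inv, le_div_iff₀ (pow_pos hs0 2)]
      linarith
  have htan := hconc.le_add_mul_sub_of_hasDerivAt right_mem_uIcc left_mem_uIcc
    ((hG' 1 (mem_Ioi.2 one_pos)).add ((hasDerivAt_log one_ne_zero).const_mul K))
  simp only [log_one, mul_zero, add_zero, inv_one, mul_one] at htan
  linarith

section LogMoment

variable {α : Type*} [MeasurableSpace α] {ν : Measure α} {g w : α → ℝ}

def logMoment (g w : α → ℝ) (ν : Measure α) (j : ℕ) (s : ℝ) : ℝ :=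
  ∫ x, g x ^ s * log (g x) ^ j * w x ∂ν

lemma integrable_rpow_mul_log_pow_mul (hg : Measurable g) (hw : Measurable w)
    (hg₀ : ∀ x, 0 ≤ g x) (hw₀ : ∀ x, 0 ≤ w x)
    (hI : ∀ s : ℝ, 0 < s → Integrable (fun x => g x ^ s * w x) ν) (j : ℕ) {s : ℝ} (hs : 0 < s) :
    Integrable (fun x => g x ^ s * log (g x) ^ j * w x) ν := by
  refine ((((hI (s / 2) (by positivity)).add (hI (2 * s) (by positivity))).const_mul
    (2 * (4 * j / s) ^ j))).mono' (by fun_prop) (Eventually.of_forall fun x => ?_)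
  exact norm_rpow_mul_log_pow_mul_le (hg₀ x) (hw₀ x) hs (Metric.mem_ball_self (by positivity)) j

lemma hasDerivAt_logMoment (hg : Measurable g) (hw : Measurable w)
    (hg₀ : ∀ x, 0 ≤ g x) (hw₀ : ∀ x, 0 ≤ w x)
    (hI : ∀ s : ℝ, 0 < s → Integrable (fun x => g x ^ s * w x) ν) (j : ℕ) {s : ℝ} (hs : 0 < s) :
    HasDerivAt (logMoment g w ν j) (logMoment g w ν (j + 1) s) s := by
  have hball : ∀ u ∈ Metric.ball s (s / 4), 0 < u := fun u hu => by
    rw [Metric.mem_ball, dist_eq, abs_lt] at hu; linarith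
  refine (hasDerivAt_integral_of_dominated_loc_of_deriv_le (Metric.ball_mem_nhds s (by positivity))
    ?_ (integrable_rpow_mul_log_pow_mul hg hw hg₀ hw₀ hI j hs) (by fun_prop)
    (Eventually.of_forall fun x u hu =>
      norm_rpow_mul_log_pow_mul_le (hg₀ x) (hw₀ x) hs hu (j + 1))
    (((hI (s / 2) (by positivity)).add (hI (2 * s) (by positivity))).const_mul _)
    (Eventually.of_forall fun x u hu => ?_)).2
  · filter_upwards [Ioi_mem_nhds hs] with u hu
    exact (integrable_rpow_mul_log_pow_mul hg hw hg₀ hw₀ hI j hu).aestronglyMeasurable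
  · exact (((hasDerivAt_const_rpow_of_nonneg (hg₀ x) (hball u hu)).mul_const
      (log (g x) ^ j)).mul_const (w x)).congr_deriv (by ring)

lemma contDiffOn_logMoment (hg : Measurable g) (hw : Measurable w)
    (hg₀ : ∀ x, 0 ≤ g x) (hw₀ : ∀ x, 0 ≤ w x)
    (hI : ∀ s : ℝ, 0 < s → Integrable (fun x => g x ^ s * w x) ν) (n : ℕ) (j : ℕ) :
    ContDiffOn ℝ n (logMoment g w ν j) (Ioi 0) := by
  induction n generalizing j with
  | zero =>
    exact contDiffOn_zero.2 fun s hs =>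
      (hasDerivAt_logMoment hg hw hg₀ hw₀ hI j hs).continuousAt.continuousWithinAt
  | succ n ih =>
    rw [Nat.cast_succ, contDiffOn_succ_iff_deriv_of_isOpen isOpen_Ioi]
    refine ⟨fun s hs => (hasDerivAt_logMoment hg hw hg₀ hw₀ hI j hs).differentiableAt
      |>.differentiableWithinAt, by simp, (ih (j + 1)).congr fun s hs => ?_⟩
    exact (hasDerivAt_logMoment hg hw hg₀ hw₀ hI j hs).deriv

end LogMoment

namespace CondInfo

variable {k : ℕ} {f : ((Fin (2 * k) → ℝ) × ℝ) → ℝ}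

lemma measurable_margX (hf : Measurable f) : Measurable (margX f) :=
  hf.stronglyMeasurable.integral_prod_right'.measurable

lemma measurable_condD (hf : Measurable f) : Measurable (condD f) :=
  hf.div ((measurable_margX hf).comp measurable_fst)

lemma measurable_condD_rpow_mul_margX (hf : Measurable f) (s : ℝ) :
    Measurable fun p => condD f p ^ s * margX f p.1 :=
  (measurable_condD hf).pow_const s |>.mul ((measurable_margX hf).comp measurable_fst)

lemma margX_nonneg (hf₀ : ∀ p, 0 ≤ f p) (x : Fin (2 * k) → ℝ) : 0 ≤ margX f x :=
  integral_nonneg fun y => hf₀ (x, y)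

lemma condD_nonneg (hf₀ : ∀ p, 0 ≤ f p) (p : (Fin (2 * k) → ℝ) × ℝ) : 0 ≤ condD f p :=
  div_nonneg (hf₀ p) (margX_nonneg hf₀ p.1)

lemma condD_mul_margX_ae (hf : Measurable f) (hf₀ : ∀ p, 0 ≤ f p)
    (hf₁ : ∫⁻ p, ENNReal.ofReal (f p) = 1) :
    ∀ᵐ p, condD f p * margX f p.1 = f p := by
  have hfi : Integrable f := ⟨hf.aestronglyMeasurable,
    (hasFiniteIntegral_iff_ofReal (ae_of_all _ hf₀)).2 (by rw [hf₁]; exact ENNReal.one_lt_top)⟩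
  have hms : MeasurableSet {p | condD f p * margX f p.1 = f p} :=
    measurableSet_eq_fun ((measurable_condD hf).mul ((measurable_margX hf).comp measurable_fst)) hf
  rw [Measure.volume_eq_prod] at hfi ⊢
  rw [Measure.ae_prod_iff_ae_ae hms]
  filter_upwards [hfi.prod_right_ae] with x hx
  by_cases h0 : margX f x = 0
  · have hz : (fun y => f (x, y)) =ᵐ[volume] 0 :=
      (integral_eq_zero_iff_of_nonneg (fun y => hf₀ (x, y)) hx).1 h0
    filter_upwards [hz] with y hy
    simp_all
  · exact ae_of_all _ fun y => div_mul_cancel₀ _ h0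

lemma Lmom_eq_logMoment_zero (hf : Measurable f) (hf₀ : ∀ p, 0 ≤ f p) :
    Lmom f = logMoment (condD f) (fun p => margX f p.1) volume 0 := by
  ext s
  simp only [Lmom, logMoment, pow_zero, mul_one]
  exact (integral_eq_lintegral_of_nonneg_ae
    (ae_of_all _ fun p => mul_nonneg (rpow_nonneg (condD_nonneg hf₀ p) s) (margX_nonneg hf₀ p.1))
    (measurable_condD_rpow_mul_margX hf s).aestronglyMeasurable).symm

lemma integrable_condD_rpow_mul_margX (hf : Measurable f) (hf₀ : ∀ p, 0 ≤ f p)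
    (hL : ∀ t : ℝ, 0 < t → ∫⁻ p, ENNReal.ofReal (condD f p ^ t * margX f p.1) < ⊤)
    (s : ℝ) (hs : 0 < s) : Integrable fun p => condD f p ^ s * margX f p.1 :=
  ⟨(measurable_condD_rpow_mul_margX hf s).aestronglyMeasurable,
    (hasFiniteIntegral_iff_ofReal (ae_of_all _ fun p =>
      mul_nonneg (rpow_nonneg (condD_nonneg hf₀ p) s) (margX_nonneg hf₀ p.1))).2 (hL s hs)⟩

lemma contDiffOn_Lmom (hf : Measurable f) (hf₀ : ∀ p, 0 ≤ f p)
    (hL : ∀ t : ℝ, 0 < t → ∫⁻ p, ENNReal.ofReal (condD f p ^ t * margX f p.1) < ⊤) (n : ℕ) :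
    ContDiffOn ℝ n (Lmom f) (Ioi 0) := by
  rw [Lmom_eq_logMoment_zero hf hf₀]
  exact contDiffOn_logMoment (measurable_condD hf) ((measurable_margX hf).comp measurable_fst)
    (condD_nonneg hf₀) (fun p => margX_nonneg hf₀ p.1)
    (integrable_condD_rpow_mul_margX hf hf₀ hL) n 0

lemma Lmom_one (hf : Measurable f) (hf₀ : ∀ p, 0 ≤ f p)
    (hf₁ : ∫⁻ p, ENNReal.ofReal (f p) = 1) : Lmom f 1 = 1 := by
  have hfactor : ∫⁻ p, ENNReal.ofReal (condD f p ^ (1 : ℝ) * margX f p.1)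
      = ∫⁻ p, ENNReal.ofReal (f p) := by
    refine lintegral_congr_ae ?_
    filter_upwards [condD_mul_margX_ae hf hf₀ hf₁] with p hp
    rw [rpow_one, hp]
  rw [Lmom, hfactor, hf₁, ENNReal.toReal_one]

lemma hasDerivAt_Lmom_one (hf : Measurable f) (hf₀ : ∀ p, 0 ≤ f p)
    (hf₁ : ∫⁻ p, ENNReal.ofReal (f p) = 1)
    (hL : ∀ t : ℝ, 0 < t → ∫⁻ p, ENNReal.ofReal (condD f p ^ t * margX f p.1) < ⊤) :
    HasDerivAt (Lmom f) (-hYX f) 1 := by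
  have h : HasDerivAt (logMoment (condD f) (fun p => margX f p.1) volume 0)
      (logMoment (condD f) (fun p => margX f p.1) volume 1 1) 1 :=
    hasDerivAt_logMoment (measurable_condD hf) ((measurable_margX hf).comp measurable_fst)
      (condD_nonneg hf₀) (fun p => margX_nonneg hf₀ p.1)
      (integrable_condD_rpow_mul_margX hf hf₀ hL) 0 one_pos
  rw [← Lmom_eq_logMoment_zero hf hf₀] at h
  convert h using 1
  rw [hYX, neg_neg, logMoment]
  refine integral_congr_ae ?_
  filter_upwards [condD_mul_margX_ae hf hf₀ hf₁] with p hp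
  rw [← hp, rpow_one, pow_one]
  ring

lemma lintegral_exp_mul_info_eq (hf : Measurable f) (hf₀ : ∀ p, 0 ≤ f p)
    (hf₁ : ∫⁻ p, ENNReal.ofReal (f p) = 1)
    (hL : ∀ t : ℝ, 0 < t → ∫⁻ p, ENNReal.ofReal (condD f p ^ t * margX f p.1) < ⊤)
    {t : ℝ} (ht : 0 < t) :
    ∫⁻ p, ENNReal.ofReal (exp ((1 - t) * ((-log (condD f p)) - hYX f)))
        ∂(volume.withDensity fun p => ENNReal.ofReal (f p))
      = ENNReal.ofReal (exp ((t - 1) * hYX f) * Lmom f t) := by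
  have hpoint : ∀ {g w : ℝ}, 0 ≤ g →
      g * w * exp ((1 - t) * (-log g - hYX f)) = exp ((t - 1) * hYX f) * (g ^ t * w) := by
    intro g w hg
    rcases hg.eq_or_lt with rfl | hg
    · simp [zero_rpow ht.ne']
    · rw [show (1 - t) * (-log g - hYX f) = log g * (t - 1) + (t - 1) * hYX f by ring,
        exp_add, ← rpow_def_of_pos hg, rpow_sub_one hg.ne']
      field_simp
  rw [lintegral_withDensity_eq_lintegral_mul _ hf.ennreal_ofReal
      (by have := measurable_condD hf; fun_prop),
    ENNReal.ofReal_mul (exp_nonneg _), Lmom, ENNReal.ofReal_toReal (hL t ht).ne,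
    ← lintegral_const_mul _ (measurable_condD_rpow_mul_margX hf t).ennreal_ofReal]
  refine lintegral_congr_ae ?_
  filter_upwards [condD_mul_margX_ae hf hf₀ hf₁] with p hp
  rw [Pi.mul_apply, ← ENNReal.ofReal_mul (hf₀ p), ← ENNReal.ofReal_mul (exp_nonneg _), ← hp,
    hpoint (condD_nonneg hf₀ p)]

lemma expRate_rfun_sub_one {c t : ℝ} (ht : 0 < t) :
    expRate c (rfun (t - 1)) = ENNReal.ofReal (exp (c * (t - 1 - log t))) := by
  have hr : 0 ≤ t - 1 - log t := by linarith [log_le_sub_one_of_pos ht]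
  rw [rfun, if_pos (by linarith), expRate, if_neg ENNReal.ofReal_ne_top, add_sub_cancel,
    ENNReal.toReal_ofReal hr]

lemma exp_mul_Lmom_le_of_le_one (hf : Measurable f) (hf₀ : ∀ p, 0 ≤ f p)
    (hf₁ : ∫⁻ p, ENNReal.ofReal (f p) = 1)
    (hL : ∀ t : ℝ, 0 < t → ∫⁻ p, ENNReal.ofReal (condD f p ^ t * margX f p.1) < ⊤)
    {K : ℝ} (hK : K ∈ upperBounds (K1setA f)) {t : ℝ} (ht : 0 < t) (ht1 : t ≤ 1) :
    exp ((t - 1) * hYX f) * Lmom f t ≤ exp ((K + 1) * (t - 1 - log t)) := by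
  have htaylor := le_add_deriv_mul_sub_add_mul_sub_log (G := fun u => u * Lmom f u)
    (contDiffOn_id.mul (contDiffOn_Lmom hf hf₀ hL 2)) ht fun s hs => by
      rw [uIoo_of_le ht1] at hs
      exact hK ⟨s, ⟨ht.trans hs.1, hs.2.le⟩, rfl⟩
  have hderiv : HasDerivAt (fun u => u * Lmom f u) (1 * Lmom f 1 + 1 * -hYX f) 1 :=
    (hasDerivAt_id' 1).mul (hasDerivAt_Lmom_one hf hf₀ hf₁ hL)
  rw [hderiv.deriv, Lmom_one hf hf₀ hf₁] at htaylor
  calc exp ((t - 1) * hYX f) * Lmom f t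
      ≤ exp (K * (t - 1 - log t) + 1 * (t - 1) - log t) :=
        exp_mul_le_exp_of_mul_le_one_add ht (by linarith)
    _ = exp ((K + 1) * (t - 1 - log t)) := by ring_nf

lemma exp_mul_Lmom_le_of_one_lt (hf : Measurable f) (hf₀ : ∀ p, 0 ≤ f p)
    (hf₁ : ∫⁻ p, ENNReal.ofReal (f p) = 1)
    (hL : ∀ t : ℝ, 0 < t → ∫⁻ p, ENNReal.ofReal (condD f p ^ t * margX f p.1) < ⊤)
    {Q : ℝ} (hQ : 0 < Q) {K : ℝ} (hK : K ∈ upperBounds (K1setB f Q)) {t : ℝ} (ht1 : 1 < t) :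
    exp ((t - 1) * hYX f) * Lmom f t ≤ exp ((K + 1) * (t - 1 - log t)) := by
  have ht : 0 < t := one_pos.trans ht1
  have htaylor := le_add_deriv_mul_sub_add_mul_sub_log (G := fun u => Q ^ (1 - u) * Lmom f u)
    ((contDiff_const.rpow (contDiff_const.sub contDiff_id) fun _ => hQ.ne').contDiffOn.mul
      (contDiffOn_Lmom hf hf₀ hL 2)) ht fun s hs => by
      rw [uIoo_of_ge ht1.le] at hs
      exact hK ⟨s, hs.1, rfl⟩
  have hderiv : HasDerivAt (fun u => Q ^ (1 - u) * Lmom f u)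
      (log Q * (-1) * Q ^ (1 - 1 : ℝ) * Lmom f 1 + Q ^ (1 - 1 : ℝ) * -hYX f) 1 :=
    (((hasDerivAt_id' 1).const_sub 1).const_rpow hQ).mul (hasDerivAt_Lmom_one hf hf₀ hf₁ hL)
  rw [hderiv.deriv, Lmom_one hf hf₀ hf₁, sub_self, rpow_zero] at htaylor
  have hr : 0 ≤ t - 1 - log t := by linarith [log_le_sub_one_of_pos ht]
  calc exp ((t - 1) * hYX f) * Lmom f t
      ≤ exp (K * (t - 1 - log t) + -log Q * (t - 1) - log (Q ^ (1 - t))) :=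
        exp_mul_le_exp_of_mul_le_one_add (rpow_pos_of_pos hQ _) (by linarith)
    _ ≤ exp ((K + 1) * (t - 1 - log t)) := by
        rw [log_rpow hQ]
        gcongr
        nlinarith

end CondInfo

/-- **Exponential moment bound for the conditional information content**
(Proposition 1). -/
theorem exp_moment_conditional_information
    (k : ℕ) (f : ((Fin (2 * k) → ℝ) × ℝ) → ℝ)
    (hmeas : Measurable f) (hpos : ∀ p, 0 ≤ f p)
    (hint : ∫⁻ p, ENNReal.ofReal (f p) = 1)
    -- `L(t) < ∞` for all `t > 0`
    (hL : ∀ t : ℝ, 0 < t → ∫⁻ p, ENNReal.ofReal (condD f p ^ t * margX f p.1) < ⊤)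
    (Q : ℝ) (hQ : 0 < Q)
    -- `K₁ < ∞`
    (hK : BddAbove (K1setA f) ∧ BddAbove (K1setB f Q)) :
    ∀ μ : ℝ,
      ∫⁻ p, ENNReal.ofReal (Real.exp (μ * ((-Real.log (condD f p)) - hYX f)))
          ∂(volume.withDensity fun p => ENNReal.ofReal (f p))
        ≤ expRate (K1 f Q + 1) (rfun (-μ)) := by
  intro μ
  rcases le_or_gt 1 μ with hμ | hμ
  · rw [rfun, if_neg (by linarith), expRate, if_pos rfl]
    exact le_top
  obtain ⟨t, rfl⟩ : ∃ t, μ = 1 - t := ⟨1 - μ, by ring⟩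
  have ht : 0 < t := by linarith
  rw [lintegral_exp_mul_info_eq hmeas hpos hint hL ht, neg_sub, expRate_rfun_sub_one ht]
  refine ENNReal.ofReal_le_ofReal ?_
  rcases le_or_gt t 1 with ht1 | ht1
  · exact exp_mul_Lmom_le_of_le_one hmeas hpos hint hL
      (fun _ hx => (le_csSup hK.1 hx).trans (le_max_left _ _)) ht ht1
  · exact exp_mul_Lmom_le_of_one_lt hmeas hpos hint hL hQ
      (fun _ hx => (le_csSup hK.2 hx).trans (le_max_right _ _)) ht1
end
end

section
/- (Differentiation under the integral sign for totally monotone-type integrands.) Fix n ∈ ℤ⁺ and let g: ℝⁿ × ℂ → ℂ be such that for each fixed x ∈ ℝⁿ, u ↦ g(x,u) is a real entire function, g(x,u) ≥ 0 for all (x,u) ∈ ℝⁿ × ℝ⁺, and either (−1)^l ∂^l g/∂u^l (x,t) ≥ 0 for all (l,t) ∈ ℕ × ℝ⁺ or ∂^l g/∂u^l (x,t) ≥ 0 for all (l,t) ∈ ℕ × ℝ⁺. If g(·,u) is Lebesgue integrable on ℝⁿ for every u ∈ ℝ⁺, then T(t) = ∫_{ℝⁿ} g(x,t) dx is twice differentiable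 on ℝ⁺ and T^{(l)}(t) = ∫_{ℝⁿ} ∂^l g/∂u^l (x,t) dx for l ∈ {1,2}. -/
open MeasureTheory Filter Topology Real

noncomputable section

/-!
For fixed `x`, let `f = g(x, ·)` on `(0, ∞)` and let `σ = ±1` be its sign pattern, so that
`σ ^ l f⁽ˡ⁾ ≥ 0`. Then `f` and `σ f'` are nonnegative and convex, since `f'' ≥ 0` and
`σ f''' ≥ 0`. Comparing with the secant slopes to `a / 2` and to `b + 1`, the derivative of a
nonnegative convex function on `(0, ∞)` is bounded on `[a, b]` by `f (b + 1) + 2 / a * f (a / 2)`.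
Hence `∂ᵤg` and `∂ᵤ²g` are dominated on compact subintervals of `(0, ∞)` by combinations of
finitely many integrable functions `g(·, v)`, and differentiation under the integral sign applies
twice.
-/

open Set

def slopeBound (f : ℝ → ℝ) (a b : ℝ) : ℝ :=
  f (b + 1) + 2 / a * f (a / 2)

lemma convexOn_of_hasDerivAt2_nonneg {D : Set ℝ} (hD : Convex ℝ D) (hDo : IsOpen D)
    {f f' f'' : ℝ → ℝ} (hf : ∀ u ∈ D, HasDerivAt f (f' u) u)
    (hf' : ∀ u ∈ D, HasDerivAt f' (f'' u) u) (hf'' : ∀ u ∈ D, 0 ≤ f'' u) :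
    ConvexOn ℝ D f := by
  refine convexOn_of_hasDerivWithinAt2_nonneg (f' := f') (f'' := f'') hD
    (fun u hu => (hf u hu).continuousAt.continuousWithinAt) ?_ ?_ ?_ <;>
  rw [hDo.interior_eq]
  exacts [fun u hu => (hf u hu).hasDerivWithinAt, fun u hu => (hf' u hu).hasDerivWithinAt, hf'']

lemma ConvexOn.abs_le_slopeBound {f : ℝ → ℝ} (hconv : ConvexOn ℝ (Ioi 0) f)
    (hnn : ∀ u, 0 < u → 0 ≤ f u) {a b u f' : ℝ} (ha : 0 < a) (hu : u ∈ Icc a b)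
    (hf : HasDerivAt f f' u) : |f'| ≤ slopeBound f a b := by
  obtain ⟨hau, hub⟩ := hu
  have hu0 : 0 < u := ha.trans_le hau
  have hlow : slope f (a / 2) u ≤ f' :=
    hconv.slope_le_of_hasDerivAt (half_pos ha) hu0 (by linarith) hf
  have hupp : f' ≤ slope f u (b + 1) :=
    hconv.le_slope_of_hasDerivAt hu0 (by rw [mem_Ioi]; linarith) (by linarith) hf
  rw [slope_def_field] at hlow hupp
  have hfa := hnn (a / 2) (half_pos ha)
  have hfu := hnn u hu0
  have hfb := hnn (b + 1) (by linarith)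
  have h1 : -(2 / a * f (a / 2)) ≤ f' := by
    refine le_trans ?_ hlow
    have hc : 2 / a * f (a / 2) * (a / 2) = f (a / 2) := by field_simp
    rw [le_div_iff₀ (by linarith)]
    nlinarith [show 0 ≤ 2 / a * f (a / 2) by positivity]
  have h2 : f' ≤ f (b + 1) := by
    refine hupp.trans ?_
    rw [div_le_iff₀ (by linarith)]
    nlinarith
  rw [slopeBound, abs_le]
  constructor <;> linarith [show 0 ≤ 2 / a * f (a / 2) by positivity]

section SignedDerivatives

variable {F : ℕ → ℝ → ℝ} (hF : ∀ l u, HasDerivAt (F l) (F (l + 1) u) u) {σ : ℝ}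
  (hsign : ∀ l u, 0 < u → 0 ≤ σ ^ l * F l u)
  (hσ : |σ| = 1)
include hF hsign hσ

lemma abs_first_deriv_le_slopeBound {a b u : ℝ} (ha : 0 < a) (hu : u ∈ Icc a b) :
    |F 1 u| ≤ slopeBound (F 0) a b := by
  refine ConvexOn.abs_le_slopeBound ?_ (fun v hv => by simpa using hsign 0 v hv) ha hu (hF 0 u)
  refine convexOn_of_hasDerivAt2_nonneg (convex_Ioi 0) isOpen_Ioi (fun v _ => hF 0 v)
    (fun v _ => hF 1 v) fun v hv => ?_
  simpa [← sq_abs σ, hσ] using hsign 2 v hv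

lemma abs_second_deriv_le_slopeBound {a b u : ℝ} (ha : 0 < a) (hu : u ∈ Icc a b) :
    |F 2 u| ≤ (1 + 2 / a) * slopeBound (F 0) (a / 2) (b + 1) := by
  have hconv : ConvexOn ℝ (Ioi 0) (fun v => σ * F 1 v) :=
    convexOn_of_hasDerivAt2_nonneg (convex_Ioi 0) isOpen_Ioi (fun v _ => (hF 1 v).const_mul σ)
      (fun v _ => (hF 2 v).const_mul σ) fun v hv => by
        simpa [pow_succ, ← sq_abs σ, hσ] using hsign 3 v hv
  have h := hconv.abs_le_slopeBound (fun v hv => by simpa using hsign 1 v hv) ha hu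
    ((hF 1 u).const_mul σ)
  have hF1 : ∀ v ∈ Icc (a / 2) (b + 1), σ * F 1 v ≤ slopeBound (F 0) (a / 2) (b + 1) :=
    fun v hv => calc
      σ * F 1 v ≤ |F 1 v| := by
        simpa [abs_mul, hσ] using le_abs_self (σ * F 1 v)
      _ ≤ _ := abs_first_deriv_le_slopeBound hF hsign hσ (half_pos ha) hv
  have hab : a ≤ b := hu.1.trans hu.2
  rw [abs_mul, hσ, one_mul] at h
  calc |F 2 u| ≤ slopeBound (fun v => σ * F 1 v) a b := h
    _ ≤ _ := by
      rw [slopeBound, add_mul, one_mul]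
      gcongr
      · exact hF1 _ ⟨by linarith, le_rfl⟩
      · exact hF1 _ ⟨le_rfl, by linarith⟩

end SignedDerivatives

lemma hasDerivAt_re_iteratedDeriv {f : ℂ → ℂ} (hf : Differentiable ℂ f) (l : ℕ) (u : ℝ) :
    HasDerivAt (fun s : ℝ => (iteratedDeriv l f s).re) (iteratedDeriv (l + 1) f u).re u := by
  rw [iteratedDeriv_succ]
  exact ((hf.contDiff (n := ⊤)).differentiable_iteratedDeriv l (by simp) u).hasDerivAt
    |>.real_of_complex

lemma exists_abs_eq_one_nonneg_mul_re_iteratedDeriv {f : ℂ → ℂ}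
    (hsign : (∀ (l : ℕ) (t : ℝ), 0 < t → 0 ≤ ((-1) ^ l * iteratedDeriv l f (t : ℂ)).re) ∨
      (∀ (l : ℕ) (t : ℝ), 0 < t → 0 ≤ (iteratedDeriv l f (t : ℂ)).re)) :
    ∃ σ : ℝ, |σ| = 1 ∧ ∀ (l : ℕ) (t : ℝ), 0 < t → 0 ≤ σ ^ l * (iteratedDeriv l f t).re := by
  rcases hsign with h | h
  · refine ⟨-1, by simp, fun l t ht => ?_⟩
    simpa only [show ((-1 : ℂ) ^ l) = (((-1 : ℝ) ^ l : ℝ) : ℂ) by push_cast; ring,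
      Complex.re_ofReal_mul] using h l t ht
  · exact ⟨1, abs_one, fun l t ht => by simpa using h l t ht⟩

section ParametricIntegral

variable {α : Type*} [MeasurableSpace α] {μ : Measure α}

lemma aestronglyMeasurable_of_hasDerivAt {G : ℝ → α → ℝ} {G' : α → ℝ} {t : ℝ}
    (hmeas : ∀ u, t ≤ u → AEStronglyMeasurable (G u) μ) (hG : ∀ x, HasDerivAt (G · x) (G' x) t) :
    AEStronglyMeasurable G' μ := by
  have hseq : Tendsto (fun k : ℕ => (k : ℝ)⁻¹) atTop (𝓝[>] 0) :=
    tendsto_inv_atTop_nhdsGT_zero.comp tendsto_natCast_atTop_atTop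
  refine aestronglyMeasurable_of_tendsto_ae atTop
    (f := fun (k : ℕ) x => ((k : ℝ)⁻¹)⁻¹ • (G (t + (k : ℝ)⁻¹) x - G t x))
    (fun k => ((hmeas _ (le_add_of_nonneg_right (inv_nonneg.mpr k.cast_nonneg))).sub
      (hmeas t le_rfl)).const_smul ((k : ℝ)⁻¹)⁻¹) ?_
  exact ae_of_all _ fun x => (hG x).tendsto_slope_zero_right.comp hseq

theorem hasDerivAt_integral_of_forall_Icc_bound {G G' : ℝ → α → ℝ}
    (hG : ∀ x u, 0 < u → HasDerivAt (G · x) (G' u x) u)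
    (hint : ∀ u, 0 < u → Integrable (G u) μ)
    (hbound : ∀ a b, 0 < a → a ≤ b → ∃ B, Integrable B μ ∧ ∀ x, ∀ u ∈ Icc a b, |G' u x| ≤ B x)
    {t : ℝ} (ht : 0 < t) :
    Integrable (G' t) μ ∧ HasDerivAt (fun u => ∫ x, G u x ∂μ) (∫ x, G' t x ∂μ) t := by
  obtain ⟨B, hB, hGB⟩ := hbound (t / 2) (2 * t) (half_pos ht) (by linarith)
  have hIcc : Icc (t / 2) (2 * t) ∈ 𝓝 t := Icc_mem_nhds (by linarith) (by linarith)
  refine hasDerivAt_integral_of_dominated_loc_of_deriv_le hIcc ?_ (hint t ht)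
    (aestronglyMeasurable_of_hasDerivAt (fun u hu => (hint u (ht.trans_le hu)).1)
      fun x => hG x t ht) (ae_of_all _ fun x u hu => hGB x u hu) hB
    (ae_of_all _ fun x u hu => hG x u (lt_of_lt_of_le (half_pos ht) hu.1))
  filter_upwards [Ioi_mem_nhds ht] with u hu using (hint u hu).1

end ParametricIntegral

lemma integrable_slopeBound {α : Type*} [MeasurableSpace α] {μ : Measure α} {G : ℝ → α → ℝ}
    (hint : ∀ u, 0 < u → Integrable (G u) μ) {a b : ℝ} (ha : 0 < a) (hab : a ≤ b) :
    Integrable (fun x => slopeBound (G · x) a b) μ :=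
  (hint _ (by linarith)).add ((hint _ (half_pos ha)).const_mul _)

theorem differentiation_under_integral_general
    (n : ℕ) (g : (Fin n → ℝ) → ℂ → ℂ)
    -- `g(x, ·)` is entire for each fixed `x`
    (hent : ∀ x, Differentiable ℂ (g x))
    -- all derivatives on `ℝ⁺` alternate in sign or are all nonnegative
    (hsign : ∀ x,
      (∀ (l : ℕ) (t : ℝ), 0 < t → 0 ≤ ((-1) ^ l * iteratedDeriv l (g x) (t : ℂ)).re) ∨
      (∀ (l : ℕ) (t : ℝ), 0 < t → 0 ≤ (iteratedDeriv l (g x) (t : ℂ)).re))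
    -- `g(·, u)` is Lebesgue integrable for every `u > 0`
    (hint : ∀ u : ℝ, 0 < u → Integrable fun x => (g x (u : ℂ)).re) :
    ∀ t : ℝ, 0 < t →
      HasDerivAt (fun u : ℝ => ∫ x, (g x (u : ℂ)).re)
        (∫ x, (iteratedDeriv 1 (g x) (t : ℂ)).re) t ∧
      HasDerivAt (deriv fun u : ℝ => ∫ x, (g x (u : ℂ)).re)
        (∫ x, (iteratedDeriv 2 (g x) (t : ℂ)).re) t := by
  set F : (Fin n → ℝ) → ℕ → ℝ → ℝ := fun x l u => (iteratedDeriv l (g x) u).re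
  have hF : ∀ x l u, HasDerivAt (F x l) (F x (l + 1) u) u :=
    fun x => hasDerivAt_re_iteratedDeriv (hent x)
  choose σ hσ hσF using fun x => exists_abs_eq_one_nonneg_mul_re_iteratedDeriv (hsign x)
  have hT : (fun u : ℝ => ∫ x, (g x (u : ℂ)).re) = fun u => ∫ x, F x 0 u := by simp [F]
  have hint0 : ∀ u : ℝ, 0 < u → Integrable fun x => F x 0 u := by simpa [F] using hint
  have hD1 : ∀ u : ℝ, 0 < u → Integrable (fun x => F x 1 u) ∧
      HasDerivAt (fun v => ∫ x, F x 0 v) (∫ x, F x 1 u) u :=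
    fun u => hasDerivAt_integral_of_forall_Icc_bound (fun x v _ => hF x 0 v) hint0
      fun a b ha hab => ⟨_, integrable_slopeBound hint0 ha hab, fun x v hv =>
        abs_first_deriv_le_slopeBound (hF x) (hσF x) (hσ x) ha hv⟩
  have hD2 : ∀ u : ℝ, 0 < u → HasDerivAt (fun v => ∫ x, F x 1 v) (∫ x, F x 2 u) u :=
    fun u hu => (hasDerivAt_integral_of_forall_Icc_bound (fun x v _ => hF x 1 v)
      (fun v hv => (hD1 v hv).1) (fun a b ha hab => ⟨_,
        (integrable_slopeBound (b := b + 1) hint0 (half_pos ha) (by linarith)).const_mul _,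
        fun x v hv => abs_second_deriv_le_slopeBound (hF x) (hσF x) (hσ x) ha hv⟩) hu).2
  intro t ht
  rw [hT]
  refine ⟨(hD1 t ht).2, (hD2 t ht).congr_of_eventuallyEq ?_⟩
  filter_upwards [Ioi_mem_nhds ht] with u hu using (hD1 u hu).2.deriv

/-- **Differentiation under the integral sign for totally monotone-type
integrands** (Lemma 2, part (i)).  `g(x, ·)` is a real entire function for each
`x`, nonnegative on `ℝⁿ × ℝ⁺`, with all `u`-derivatives on `ℝ⁺` either all
nonnegative or alternating in sign, and `g(·, u)` integrable for each `u > 0`.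
Then `T(t) = ∫ g(x,t) dx` is twice differentiable on `ℝ⁺` with
`T^{(l)}(t) = ∫ ∂^l g/∂u^l (x,t) dx` for `l ∈ {1,2}`. -/
theorem differentiation_under_integral
    (n : ℕ) (g : (Fin n → ℝ) → ℂ → ℂ)
    -- `g(x, ·)` is entire for each fixed `x`
    (hent : ∀ x, Differentiable ℂ (g x))
    -- ... and real on the real axis
    (hreal : ∀ (x) (t : ℝ), (g x t).im = 0)
    -- `g ≥ 0` on `ℝⁿ × ℝ⁺`
    (hpos : ∀ (x) (t : ℝ), 0 < t → 0 ≤ (g x (t : ℂ)).re)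
    -- all derivatives on `ℝ⁺` alternate in sign or are all nonnegative
    (hsign : ∀ x,
      (∀ (l : ℕ) (t : ℝ), 0 < t → 0 ≤ ((-1) ^ l * iteratedDeriv l (g x) (t : ℂ)).re) ∨
      (∀ (l : ℕ) (t : ℝ), 0 < t → 0 ≤ (iteratedDeriv l (g x) (t : ℂ)).re))
    -- `g(·, u)` is Lebesgue integrable for every `u > 0`
    (hint : ∀ u : ℝ, 0 < u → Integrable fun x => (g x (u : ℂ)).re) :
    ∀ t : ℝ, 0 < t →
      HasDerivAt (fun u : ℝ => ∫ x, (g x (u : ℂ)).re)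
        (∫ x, (iteratedDeriv 1 (g x) (t : ℂ)).re) t ∧
      HasDerivAt (deriv fun u : ℝ => ∫ x, (g x (u : ℂ)).re)
        (∫ x, (iteratedDeriv 2 (g x) (t : ℂ)).re) t :=
  differentiation_under_integral_general n g hent hsign hint
end
end

section
/- (Integral of powers of a log-concave function.) Fix n ∈ ℤ⁺ and let f: ℝⁿ → ℝ⁺ be log-concave with ‖f‖₁ < ∞ and ‖f‖_∞ < ∞. Then the constant D = sup_{t>0} (‖f‖_∞ + 1)^{−t} ∫_{ℝⁿ} tⁿ f(x)^t dx is finite, and for all t > 0, ∫_{ℝⁿ} f(x)^t dx ≤ D·(‖f‖_∞ + 1)^t / tⁿ. -/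
open MeasureTheory Filter Topology Real
open scoped ENNReal NNReal

noncomputable section

/-- A log-concave function on `ℝⁿ` (for `f ≥ 0`):
`f((1−θ)x + θy) ≥ f(x)^{1−θ} f(y)^θ`. -/
def IsLogConcaveOnPi {n : ℕ} (f : (Fin n → ℝ) → ℝ) : Prop :=
  ∀ (x y : Fin n → ℝ) (θ : ℝ), 0 ≤ θ → θ ≤ 1 →
    f x ^ (1 - θ) * f y ^ θ ≤ f ((1 - θ) • x + θ • y)

/-- The constant `D = sup_{t>0} (‖f‖_∞ + 1)^{−t} ∫ tⁿ f(x)^t dx`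
(valued in `ℝ≥0∞`; "`D` finite" is the assertion `D < ∞`). -/
noncomputable def Dlc (n : ℕ) (f : (Fin n → ℝ) → ℝ) : ℝ≥0∞ :=
  ⨆ t ∈ Set.Ioi (0 : ℝ),
    ENNReal.ofReal ((sSup (Set.range f) + 1) ^ (-t) * t ^ n) *
      ∫⁻ x, ENNReal.ofReal (f x ^ t)

/-- Change of variables `x ↦ v + t • x` for the Lebesgue integral on `ℝⁿ`. -/
lemma lintegral_comp_const_add_smul {n : ℕ} (g : (Fin n → ℝ) → ℝ≥0∞) (hg : Measurable g)
    (v : Fin n → ℝ) {t : ℝ} (ht : t ≠ 0) :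
    ∫⁻ x, g (v + t • x) = ENNReal.ofReal |((t : ℝ) ^ n)⁻¹| * ∫⁻ x, g x := by
  calc ∫⁻ x, g (v + t • x)
      = ∫⁻ y, g (v + y) ∂(Measure.map (t • · : (Fin n → ℝ) → _) volume) :=
        (lintegral_map (hg.comp (measurable_const_add v)) (measurable_const_smul t)).symm
    _ = ∫⁻ y, g (v + y) ∂(ENNReal.ofReal |(t ^ Module.finrank ℝ (Fin n → ℝ))⁻¹| • volume) := by
        rw [MeasureTheory.Measure.map_addHaar_smul volume ht]
    _ = ENNReal.ofReal |(t ^ n)⁻¹| * ∫⁻ y, g (v + y) := by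
        rw [lintegral_smul_measure]
        norm_num [Module.finrank_fin_fun]
    _ = ENNReal.ofReal |(t ^ n)⁻¹| * ∫⁻ x, g x := by
        rw [lintegral_add_left_eq_self g v]

/-- `uⁿ e^{-u} ≤ nⁿ` for `u ≥ 0`. -/
lemma pow_mul_exp_neg_le (n : ℕ) (hn : 0 < n) {u : ℝ} (hu : 0 ≤ u) :
    u ^ n * Real.exp (-u) ≤ (n : ℝ) ^ n := by
  have hn' : (0 : ℝ) < n := Nat.cast_pos.2 hn
  have h1 : u / n ≤ Real.exp (u / n) :=
    le_trans (by linarith) (Real.add_one_le_exp _)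
  have h2 : (u / n) ^ n ≤ Real.exp (u / n) ^ n :=
    pow_le_pow_left₀ (div_nonneg hu hn'.le) h1 n
  have h3 : Real.exp (u / n) ^ n = Real.exp u := by
    rw [← Real.exp_nat_mul]
    congr 1
    field_simp
  rw [h3, div_pow] at h2
  have hepos : 0 < Real.exp u := Real.exp_pos u
  have h4 : u ^ n ≤ (n : ℝ) ^ n * Real.exp u := by
    rw [div_le_iff₀ (by positivity)] at h2
    linarith [h2]
  calc u ^ n * Real.exp (-u) ≤ ((n : ℝ) ^ n * Real.exp u) * Real.exp (-u) := by
        have := Real.exp_pos (-u); nlinarith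
    _ = (n : ℝ) ^ n := by rw [mul_assoc, ← Real.exp_add]; simp

/-- **Integral of powers of a log-concave function** (Lemma 3):
`D` is finite and `∫ f^t ≤ D (‖f‖_∞ + 1)^t / tⁿ` for all `t > 0`. -/
theorem integral_rpow_logConcave
    (n : ℕ) (hn : 0 < n) (f : (Fin n → ℝ) → ℝ)
    (hpos : ∀ x, 0 ≤ f x) (hmeas : Measurable f)
    (hlc : IsLogConcaveOnPi f)
    -- `‖f‖₁ < ∞`
    (hint : Integrable f)
    -- `‖f‖_∞ < ∞`
    (hbd : BddAbove (Set.range f)) :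
    Dlc n f < ⊤ ∧
    ∀ t : ℝ, 0 < t →
      ∫⁻ x, ENNReal.ofReal (f x ^ t) ≤
        Dlc n f * ENNReal.ofReal ((sSup (Set.range f) + 1) ^ t / t ^ n) := by
  set M := sSup (Set.range f) with hMdef
  set B := M + 1 with hBdef
  have hfM : ∀ x, f x ≤ M := fun x => le_csSup hbd (Set.mem_range_self x)
  have hM0 : 0 ≤ M := (hpos (fun _ => 0)).trans (hfM _)
  have hB1 : (1 : ℝ) ≤ B := by simp [hBdef]; linarith
  have hB0 : (0 : ℝ) < B := lt_of_lt_of_le one_pos hB1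
  -- the key sup-membership bound plus the second claim
  have hmem : ∀ t : ℝ, 0 < t →
      ENNReal.ofReal (B ^ (-t) * t ^ n) * (∫⁻ x, ENNReal.ofReal (f x ^ t)) ≤ Dlc n f := by
    intro t ht
    exact le_biSup (fun t => ENNReal.ofReal (B ^ (-t) * t ^ n) *
      ∫⁻ x, ENNReal.ofReal (f x ^ t)) (Set.mem_Ioi.2 ht)
  have hsecond : ∀ t : ℝ, 0 < t →
      ∫⁻ x, ENNReal.ofReal (f x ^ t) ≤
        Dlc n f * ENNReal.ofReal (B ^ t / t ^ n) := by
    intro t ht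
    have h1 : ENNReal.ofReal (B ^ t / t ^ n) * ENNReal.ofReal (B ^ (-t) * t ^ n) = 1 := by
      rw [← ENNReal.ofReal_mul (by positivity)]
      have he : B ^ t / t ^ n * (B ^ (-t) * t ^ n) = 1 := by
        rw [Real.rpow_neg hB0.le]
        have h2 : (0:ℝ) < B ^ t := Real.rpow_pos_of_pos hB0 t
        have h3 : (0:ℝ) < t ^ n := by positivity
        field_simp
      rw [he, ENNReal.ofReal_one]
    calc ∫⁻ x, ENNReal.ofReal (f x ^ t)
        = (ENNReal.ofReal (B ^ t / t ^ n) * ENNReal.ofReal (B ^ (-t) * t ^ n)) *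
            ∫⁻ x, ENNReal.ofReal (f x ^ t) := by rw [h1, one_mul]
      _ = ENNReal.ofReal (B ^ t / t ^ n) *
            (ENNReal.ofReal (B ^ (-t) * t ^ n) * ∫⁻ x, ENNReal.ofReal (f x ^ t)) := by
          rw [mul_assoc]
      _ ≤ ENNReal.ofReal (B ^ t / t ^ n) * Dlc n f := mul_le_mul_right (hmem t ht) _
      _ = Dlc n f * ENNReal.ofReal (B ^ t / t ^ n) := mul_comm _ _
  refine ⟨?_, hsecond⟩
  -- finiteness of `D`
  rcases eq_or_lt_of_le hM0 with hM | hM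
  · -- `M = 0`, so `f ≡ 0`
    have hf0 : ∀ x, f x = 0 := fun x =>
      le_antisymm (le_of_le_of_eq (hfM x) hM.symm) (hpos x)
    have hzero : ∀ t : ℝ, 0 < t → ∫⁻ x, ENNReal.ofReal (f x ^ t) = 0 := by
      intro t ht
      have : ∀ x, ENNReal.ofReal (f x ^ t) = 0 := by
        intro x; rw [hf0 x, Real.zero_rpow ht.ne', ENNReal.ofReal_zero]
      simp [this]
    have : Dlc n f ≤ 0 := by
      refine iSup_le fun t => iSup_le fun ht => ?_
      rw [hzero t (Set.mem_Ioi.1 ht), mul_zero]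
    exact lt_of_le_of_lt this (by simp)
  · -- `M > 0`
    obtain ⟨_, ⟨x₀, rfl⟩, ha⟩ := exists_lt_of_lt_csSup (Set.range_nonempty f) hM
    set a := f x₀ with hadef
    have haM : a ≤ M := hfM x₀
    have hJ : (∫⁻ x, ENNReal.ofReal (f x)) < ⊤ := by
      have hfin := hint.hasFiniteIntegral
      rw [HasFiniteIntegral] at hfin
      refine lt_of_eq_of_lt ?_ hfin
      refine lintegral_congr fun x => ?_
      rw [← Real.enorm_eq_ofReal (hpos x)]
    set J := ∫⁻ x, ENNReal.ofReal (f x) with hJdef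
    set c := Real.log B - Real.log M with hcdef
    have hc : 0 < c := sub_pos.2 (Real.log_lt_log hM (by simp [hBdef]))
    set C := max (max 1 a⁻¹) ((n : ℝ) ^ n / c ^ n / M) with hCdef
    -- small exponents
    have hsmall : ∀ t : ℝ, 0 < t → t ≤ 1 →
        ∫⁻ x, ENNReal.ofReal (f x ^ t) ≤
          ENNReal.ofReal (a ^ (t - 1) * (t ^ n)⁻¹) * J := by
      intro t ht ht1
      have hpt : ∀ x, f x ^ t ≤ a ^ (t - 1) * f ((1 - t) • x₀ + t • x) := by
        intro x
        have h := hlc x₀ x t ht.le ht1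
        have h2 : a ^ (t - 1) * (a ^ (1 - t) * f x ^ t) ≤
            a ^ (t - 1) * f ((1 - t) • x₀ + t • x) :=
          mul_le_mul_of_nonneg_left h (Real.rpow_nonneg ha.le _)
        calc f x ^ t = a ^ (t - 1) * (a ^ (1 - t) * f x ^ t) := by
              rw [← mul_assoc, ← Real.rpow_add ha]
              norm_num
          _ ≤ _ := h2
      have hTmeas : Measurable fun x : Fin n → ℝ => (1 - t) • x₀ + t • x :=
        (measurable_id.const_smul t).const_add ((1 - t) • x₀)
      calc ∫⁻ x, ENNReal.ofReal (f x ^ t)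
          ≤ ∫⁻ x, ENNReal.ofReal (a ^ (t - 1)) *
              ENNReal.ofReal (f ((1 - t) • x₀ + t • x)) := by
            refine lintegral_mono fun x => ?_
            rw [← ENNReal.ofReal_mul (Real.rpow_nonneg ha.le _)]
            exact ENNReal.ofReal_le_ofReal (hpt x)
        _ = ENNReal.ofReal (a ^ (t - 1)) *
              ∫⁻ x, ENNReal.ofReal (f ((1 - t) • x₀ + t • x)) :=
            lintegral_const_mul _ ((hmeas.comp hTmeas).ennreal_ofReal)
        _ = ENNReal.ofReal (a ^ (t - 1)) *
              (ENNReal.ofReal |((t : ℝ) ^ n)⁻¹| * J) := by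
            rw [lintegral_comp_const_add_smul (fun x => ENNReal.ofReal (f x))
              hmeas.ennreal_ofReal ((1 - t) • x₀) ht.ne']
        _ = ENNReal.ofReal (a ^ (t - 1) * (t ^ n)⁻¹) * J := by
            rw [abs_of_nonneg (by positivity), ← mul_assoc,
              ← ENNReal.ofReal_mul (Real.rpow_nonneg ha.le _)]
    -- large exponents
    have hlarge : ∀ t : ℝ, 1 ≤ t →
        ∫⁻ x, ENNReal.ofReal (f x ^ t) ≤ ENNReal.ofReal (M ^ (t - 1)) * J := by
      intro t ht
      have hpt : ∀ x, f x ^ t ≤ M ^ (t - 1) * f x := by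
        intro x
        rcases eq_or_lt_of_le (hpos x) with h0 | h0
        · rw [← h0, Real.zero_rpow (by linarith)]
          positivity
        · have he : f x ^ t = f x ^ (t - 1) * f x := by
            have h9 : f x ^ t = f x ^ (t - 1) * f x ^ (1 : ℝ) := by
              rw [← Real.rpow_add h0]; norm_num
            rwa [Real.rpow_one] at h9
          calc f x ^ t = f x ^ (t - 1) * f x := he
            _ ≤ M ^ (t - 1) * f x :=
              mul_le_mul_of_nonneg_right
                (Real.rpow_le_rpow h0.le (hfM x) (by linarith)) h0.le
      calc ∫⁻ x, ENNReal.ofReal (f x ^ t)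
          ≤ ∫⁻ x, ENNReal.ofReal (M ^ (t - 1)) * ENNReal.ofReal (f x) := by
            refine lintegral_mono fun x => ?_
            rw [← ENNReal.ofReal_mul (Real.rpow_nonneg hM0 _)]
            exact ENNReal.ofReal_le_ofReal (hpt x)
        _ = ENNReal.ofReal (M ^ (t - 1)) * J :=
            lintegral_const_mul _ hmeas.ennreal_ofReal
    -- each supremand is bounded by `ofReal C * J`
    have hbound : ∀ t : ℝ, 0 < t →
        ENNReal.ofReal (B ^ (-t) * t ^ n) * (∫⁻ x, ENNReal.ofReal (f x ^ t)) ≤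
          ENNReal.ofReal C * J := by
      intro t ht
      rcases le_or_gt t 1 with ht1 | ht1
      · calc ENNReal.ofReal (B ^ (-t) * t ^ n) * (∫⁻ x, ENNReal.ofReal (f x ^ t))
            ≤ ENNReal.ofReal (B ^ (-t) * t ^ n) *
                (ENNReal.ofReal (a ^ (t - 1) * (t ^ n)⁻¹) * J) :=
              mul_le_mul_right (hsmall t ht ht1) _
          _ = ENNReal.ofReal ((B ^ (-t) * t ^ n) * (a ^ (t - 1) * (t ^ n)⁻¹)) * J := by
              rw [← mul_assoc, ← ENNReal.ofReal_mul (by positivity)]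
          _ ≤ ENNReal.ofReal C * J := by
              refine mul_le_mul_left (ENNReal.ofReal_le_ofReal ?_) _
              have htn : (0:ℝ) < t ^ n := by positivity
              have e1 : (B ^ (-t) * t ^ n) * (a ^ (t - 1) * (t ^ n)⁻¹) =
                  B ^ (-t) * a ^ (t - 1) := by field_simp
              rw [e1]
              have h2 : B ^ (-t) ≤ 1 :=
                Real.rpow_le_one_of_one_le_of_nonpos hB1 (by linarith)
              have h3 : a ^ (t - 1) ≤ max 1 a⁻¹ := by
                rcases le_or_gt 1 a with h4 | h4
                · exact le_trans
                    (Real.rpow_le_one_of_one_le_of_nonpos h4 (by linarith))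
                    (le_max_left _ _)
                · refine le_trans ?_ (le_max_right _ _)
                  have := Real.rpow_le_rpow_of_exponent_ge ha h4.le
                    (show (-1 : ℝ) ≤ t - 1 by linarith)
                  rwa [Real.rpow_neg_one] at this
              calc B ^ (-t) * a ^ (t - 1) ≤ 1 * max 1 a⁻¹ :=
                    mul_le_mul h2 h3 (Real.rpow_nonneg ha.le _) one_pos.le
                _ = max 1 a⁻¹ := one_mul _
                _ ≤ C := le_max_left _ _
      · calc ENNReal.ofReal (B ^ (-t) * t ^ n) * (∫⁻ x, ENNReal.ofReal (f x ^ t))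
            ≤ ENNReal.ofReal (B ^ (-t) * t ^ n) * (ENNReal.ofReal (M ^ (t - 1)) * J) :=
              mul_le_mul_right (hlarge t ht1.le) _
          _ = ENNReal.ofReal ((B ^ (-t) * t ^ n) * M ^ (t - 1)) * J := by
              rw [← mul_assoc, ← ENNReal.ofReal_mul (by positivity)]
          _ ≤ ENNReal.ofReal C * J := by
              refine mul_le_mul_left (ENNReal.ofReal_le_ofReal ?_) _
              have hBt : (0:ℝ) < B ^ t := Real.rpow_pos_of_pos hB0 t
              have hMt : (0:ℝ) < M ^ t := Real.rpow_pos_of_pos hM t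
              have e1 : (B ^ (-t) * t ^ n) * M ^ (t - 1) = t ^ n * (M / B) ^ t / M := by
                rw [Real.rpow_neg hB0.le, Real.rpow_sub hM, Real.rpow_one,
                  Real.div_rpow hM0 hB0.le]
                field_simp
                try ring
              rw [e1]
              have e2 : (M / B) ^ t = Real.exp (-(c * t)) := by
                rw [Real.rpow_def_of_pos (by positivity), Real.log_div hM.ne' hB0.ne']
                congr 1
                rw [hcdef]; ring
              have h5 : t ^ n * (M / B) ^ t ≤ (n : ℝ) ^ n / c ^ n := by
                rw [e2]
                have h6 := pow_mul_exp_neg_le n hn (u := c * t) (by positivity)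
                have h7 : t ^ n * Real.exp (-(c * t)) =
                    ((c * t) ^ n * Real.exp (-(c * t))) / c ^ n := by
                  rw [mul_pow]
                  field_simp
                  try ring
                rw [h7]
                gcongr
              refine le_trans ?_ (le_max_right _ _)
              gcongr
    -- conclude
    have hD : Dlc n f ≤ ENNReal.ofReal C * J := by
      refine iSup_le fun t => iSup_le fun ht => ?_
      exact hbound t (Set.mem_Ioi.1 ht)
    exact lt_of_le_of_lt hD (ENNReal.mul_lt_top ENNReal.ofReal_lt_top hJ)
end
end
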